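/- The embedded weight vector b̃₆ = (1/6, 0, 0, 0, 1/3, 5/18, 0, 0, 2/9, 0)ᵀ for the SSPERK(10,4) method satisfies all third-order conditions — b̃₆ᵀe = 1, b̃₆ᵀc = 1/2, b̃₆ᵀc² = 1/3, and b̃₆ᵀ(c²/2 − Ac) = 0 — and violates a fourth-order condition: b̃₆ᵀc³ = 77/324 ≠ 1/4, where A and c are the SSPERK(10,4) coefficient matrix and abscissae. -/

import Mathlib

open Matrix

/-- Coefficient matrix of the optimal SSPERK(10,4) method (zero-indexed):
for `j < i`, the entry is `1/6` if `i ≤ 4` or `j ≥ 5`, and `1/15` otherwise. -/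
noncomputable def A104 : Matrix (Fin 10) (Fin 10) ℝ :=
  Matrix.of fun i j =>
    if (j : ℕ) < (i : ℕ) then
      if (i : ℕ) ≤ 4 ∨ 5 ≤ (j : ℕ) then 1/6 else 1/15
    else 0

/-- Abscissae of the optimal SSPERK(10,4) method, `c = A·e`. -/
noncomputable def c104 : Fin 10 → ℝ := ![0, 1/6, 1/3, 1/2, 2/3, 1/3, 1/2, 2/3, 5/6, 1]

/-- Embedded weight vector for SSPERK(10,4). -/
noncomputable def bt6 : Fin 10 → ℝ := ![1/6, 0, 0, 0, 1/3, 5/18, 0, 0, 2/9, 0]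

theorem A104_mulVec_c104 :
    A104 *ᵥ c104 = ![0, 0, 1/36, 1/12, 1/6, 1/9, 1/6, 1/4, 13/36, 1/2] := by
  ext i
  fin_cases i <;>
    simp only [A104, c104, mulVec, dotProduct, of_apply, Fin.sum_univ_succ, Fin.sum_univ_zero,
      cons_val_zero, cons_val_succ] <;>
    norm_num

/-- The embedded weight vector `bt6` for SSPERK(10,4) satisfies all
third-order conditions and violates the fourth-order condition
`wᵀc³ = 1/4`, having `wᵀc³ = 77 / 324`. -/
theorem ssperk104_embedded_bt6_third_order_not_fourth :
    (∑ j : Fin 10, bt6 j = 1) ∧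
    (∑ j : Fin 10, bt6 j * c104 j = 1 / 2) ∧
    (∑ j : Fin 10, bt6 j * (c104 j) ^ 2 = 1 / 3) ∧
    (∑ j : Fin 10, bt6 j * ((c104 j) ^ 2 / 2 - A104.mulVec c104 j) = 0) ∧
    (∑ j : Fin 10, bt6 j * (c104 j) ^ 3 = 77 / 324) ∧
    ((77 / 324 : ℝ) ≠ 1 / 4) := by
  rw [A104_mulVec_c104]
  refine ⟨?_, ?_, ?_, ?_, ?_, by norm_num⟩ <;>
    simp only [bt6, c104, Fin.sum_univ_succ, Fin.sum_univ_zero, cons_val_zero, cons_val_succ] <;>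
    norm_num
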